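/- If −1/2 < b < 0, 0 < t < 1 + 2b, and x ∈ (0,1) satisfies t·artanh(x) − x = 2b·x (equivalently t·artanh(x) = (1+2b)·x), then x > √(1 − t/(1+2b)). -/

import Mathlib

/-!
With `y = (1 + x) / (1 - x)` one has `2 artanh x = log y` and `sinh (log y) = 2x / (1 - x²)`,
so `u < sinh u` for `u > 0` gives `artanh x < x / (1 - x²)` on `(0, 1)`. Feeding this into
`t artanh x = (1 + 2b) x` yields `(1 + 2b)(1 - x²) < t`, i.e. `1 - t / (1 + 2b) < x²`.
-/

/-- The inverse hyperbolic tangent, artanh(x) = (1/2)·log((1+x)/(1−x)). -/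
noncomputable def artanh (x : ℝ) : ℝ := (1 / 2) * Real.log ((1 + x) / (1 - x))

lemma artanh_lt_div_one_sub_sq {x : ℝ} (hx0 : 0 < x) (hx1 : x < 1) :
    artanh x < x / (1 - x ^ 2) := by
  have hy : 1 < (1 + x) / (1 - x) := by
    rw [lt_div_iff₀ (by linarith)]
    linarith
  have hlog : Real.log ((1 + x) / (1 - x)) < Real.sinh (Real.log ((1 + x) / (1 - x))) :=
    Real.self_lt_sinh_iff.2 (Real.log_pos hy)
  have hsinh : Real.sinh (Real.log ((1 + x) / (1 - x))) = 2 * (x / (1 - x ^ 2)) := by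
    rw [Real.sinh_log (by linarith)]
    have h1 : 1 - x ≠ 0 := by linarith
    have h2 : 1 + x ≠ 0 := by linarith
    have h3 : 1 - x ^ 2 ≠ 0 := by nlinarith
    field_simp
    ring
  unfold artanh
  linarith

theorem solution_lower_bound_b_general (b t x : ℝ) (hb1 : -1/2 < b)
    (ht : 0 < t)
    (hx : x ∈ Set.Ioo (0 : ℝ) 1) (heq : t * artanh x - x = 2 * b * x) :
    Real.sqrt (1 - t / (1 + 2 * b)) < x := by
  obtain ⟨hx0, hx1⟩ := hx
  have hc : 0 < 1 + 2 * b := by linarith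
  have hsq : 0 < 1 - x ^ 2 := by nlinarith
  have hlt : (1 + 2 * b) * x < t * (x / (1 - x ^ 2)) :=
    calc (1 + 2 * b) * x = t * artanh x := by linarith
      _ < t * (x / (1 - x ^ 2)) := mul_lt_mul_of_pos_left (artanh_lt_div_one_sub_sq hx0 hx1) ht
  have hmul : (1 + 2 * b) * (1 - x ^ 2) < t := by
    rw [mul_div_assoc', lt_div_iff₀ hsq] at hlt
    nlinarith
  rw [Real.sqrt_lt' hx0, sub_lt_comm, lt_div_iff₀ hc]
  linarith

theorem solution_lower_bound_b (b t x : ℝ) (hb1 : -1/2 < b) (hb2 : b < 0)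
    (ht : 0 < t) (ht1 : t < 1 + 2 * b)
    (hx : x ∈ Set.Ioo (0 : ℝ) 1) (heq : t * artanh x - x = 2 * b * x) :
    Real.sqrt (1 - t / (1 + 2 * b)) < x :=
  solution_lower_bound_b_general b t x hb1 ht hx heq
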